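/- For all Borel probability measures ρ, ρ' on [0,1], the function α ↦ z(αρ + (1-α)ρ') is continuous on [0,1]. -/

import Mathlib

open MeasureTheory ProbabilityTheory Filter Set
open scoped Classical ENNReal NNReal ENat

namespace OrgCrit

/-- Vertices of the rooted `b`-ary tree: finite sequences over `Fin b`,
with the root `[]`; the parent of a nonempty sequence is its `tail`
(the head being the deepest coordinate). -/
abbrev V (b : ℕ) := List (Fin b)

/-- One step of the avalanche dynamics. -/
noncomputable def nextConf (b : ℕ) (f : V b → ℝ) : V b → ℝ := fun σ =>
  match σ with
  | [] => if 1 ≤ f [] then 0 else f []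
  | _ :: l => if 1 ≤ f l then f σ + f l / (b : ℝ)
      else if 1 ≤ f σ then 0 else f σ

/-- The avalanche process `X^{(v)}(t)` started from configuration `x` with `v` added
at the root. -/
noncomputable def conf (b : ℕ) (x : V b → ℝ) (v : ℝ) : ℕ → V b → ℝ
  | 0 => fun σ => if σ = [] then x [] + v else x σ
  | t + 1 => nextConf b (conf b x v t)

/-- The avalanche set `A^{(v)}`. -/
def avalSet (b : ℕ) (x : V b → ℝ) (v : ℝ) : Set (V b) :=
  {σ | ∃ t, conf b x v t σ = 0 ∧ ∃ s < t, conf b x v s σ ≠ 0}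

/-- `x_* = sup {y ∈ [0,1] : ρ([y,1]) > 0}`. -/
noncomputable def xStar (ρ : Measure ℝ) : ℝ :=
  sSup {y : ℝ | y ∈ Set.Icc (0 : ℝ) 1 ∧ 0 < ρ (Set.Icc y 1)}

/-- `θ_b = b x_* / (b-1)`. -/
noncomputable def thetaB (b : ℕ) (ρ : Measure ℝ) : ℝ := (b : ℝ) * xStar ρ / ((b : ℝ) - 1)

/-- `Q_n^{(θ)}` built from the sequence `x` (`X_k = x k`, indexed from 1). -/
noncomputable def Qseq (b : ℕ) (θ : ℝ) (x : ℕ → ℝ) : ℕ → ℝ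
  | 0 => θ
  | n + 1 => x (n + 1) + Qseq b θ x n / (b : ℝ)

/-- `Z_n(θ) = P(Q_k^{(θ)} ≥ 1, k = 0,…,n)`. -/
noncomputable def Zfun (b : ℕ) (P : Measure (ℕ → ℝ)) (n : ℕ) (θ : ℝ) : ℝ :=
  (P {x | ∀ k ≤ n, 1 ≤ Qseq b θ x k}).toReal

/-- `Q_{n,k}^{(θ)} = Y_k + Y_{k+1}/b + … + Y_n/b^{n-k} + θ/b^{n-k+1}` (`Y_i = y i`). -/
noncomputable def Qnk (b : ℕ) (θ : ℝ) (y : ℕ → ℝ) (n k : ℕ) : ℝ :=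
  (∑ j ∈ Finset.range (n - k + 1), y (k + j) / (b : ℝ) ^ j) + θ / (b : ℝ) ^ (n - k + 1)

/-- The conditional law `P_n^{(θ)} = P( · | Q_{n,ℓ}^{(θ)} ≥ 1, ℓ = 2,…,n)`. -/
noncomputable def PnTheta (b : ℕ) (P : Measure (ℕ → ℝ)) (n : ℕ) (θ : ℝ) : Measure (ℕ → ℝ) :=
  ProbabilityTheory.cond P {y | ∀ ℓ, 2 ≤ ℓ → ℓ ≤ n → 1 ≤ Qnk b θ y n ℓ}

/-- `Q_∞ = ∑_{k ≥ 1} Y_k b^{-(k-1)}`. -/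
noncomputable def Qinf (b : ℕ) (y : ℕ → ℝ) : ℝ := ∑' k : ℕ, y (k + 1) / (b : ℝ) ^ k

/-- `Φ_b(y) = 1 - (1-y)^b`. -/
noncomputable def Phib (b : ℕ) (y : ℝ) : ℝ := 1 - (1 - y) ^ b

/-- `V_n`, the least addition at the root making the avalanche survive `n` steps. -/
noncomputable def Vmin (b : ℕ) (x : V b → ℝ) (n : ℕ) : ℝ :=
  sInf {v : ℝ | 0 < v ∧ ∀ t < n, conf b x v (t + 1) ≠ conf b x v t}

/-- `Ψ_n(ϑ)`, the distribution function of `V_n` (with `Ψ_0 = 1_{ϑ ≥ 0}`). -/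
noncomputable def Psi (b : ℕ) (P : Measure (V b → ℝ)) (n : ℕ) (ϑ : ℝ) : ℝ :=
  if n = 0 then (if 0 ≤ ϑ then 1 else 0) else (P {x | Vmin b x n ≤ ϑ}).toReal

/-- Bernoulli law on `Bool` with success probability `l`. -/
noncomputable def bern (l : ℝ) : Measure Bool :=
  ENNReal.ofReal l • Measure.dirac true + ENNReal.ofReal (1 - l) • Measure.dirac false

/-- The avalanche set `A^{(θ - X_∅)}` of the avalanche started with total value `θ`
at the root, with the convention that it is empty whenever `θ < 1`. -/
noncomputable def avalSetTheta (b : ℕ) (x : V b → ℝ) (θ : ℝ) : Set (V b) :=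
  if θ < 1 then ∅ else avalSet b x (θ - x [])

/-- `B^{(θ)}`: equal to `{∅}` if `A^{(θ-X_∅)} = ∅`, and to `{σ : m(σ) ∈ A^{(θ-X_∅)}}`
otherwise. -/
noncomputable def Bset (b : ℕ) (x : V b → ℝ) (θ : ℝ) : Set (V b) :=
  if avalSetTheta b x θ = ∅ then {([] : V b)}
  else {σ : V b | σ ≠ [] ∧ σ.tail ∈ avalSetTheta b x θ}

/-- `B_∞(θ, λ) = P_{ρ,λ}(B^{(θ)} ∩ G ≠ ∅)`, where the first component of the coordinate
at `σ` is `X_σ` and the second one indicates whether `σ` is green. -/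
noncomputable def Binfty (b : ℕ) (PJ : Measure (V b → ℝ × Bool)) (θ : ℝ) : ℝ :=
  (PJ {ω | ∃ σ ∈ Bset b (fun τ => (ω τ).1) θ, (ω σ).2 = true}).toReal

/-- The coordinates of `P` (a measure on `ℕ → ℝ`) are i.i.d. with law `ρ`. -/
def IsProjIID (ρ : Measure ℝ) (P : Measure (ℕ → ℝ)) : Prop :=
  IsProbabilityMeasure P ∧
  iIndepFun (fun i (x : ℕ → ℝ) => x i) P ∧
  ∀ i : ℕ, Measure.map (fun x : ℕ → ℝ => x i) P = ρ

/-- The coordinates of `P` (a measure on configurations on the tree) are i.i.d. with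
law `ρ`. -/
def IsTreeIID (b : ℕ) (ρ : Measure ℝ) (P : Measure (V b → ℝ)) : Prop :=
  IsProbabilityMeasure P ∧
  iIndepFun (fun σ (x : V b → ℝ) => x σ) P ∧
  ∀ σ : V b, Measure.map (fun x : V b → ℝ => x σ) P = ρ

/-- Joint law of the values and of the green sites: the coordinates are i.i.d., each with
law `ρ ⊗ Bernoulli(l)`. -/
def IsTreeGreenIID (b : ℕ) (ρ : Measure ℝ) (l : ℝ) (P : Measure (V b → ℝ × Bool)) : Prop :=
  IsProbabilityMeasure P ∧
  iIndepFun
    (fun σ (ω : V b → ℝ × Bool) => ω σ) P ∧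
  ∀ σ : V b, Measure.map (fun ω : V b → ℝ × Bool => ω σ) P = ρ.prod (bern l)

/-- `z` is the common value of `lim_n Z_n(θ)^{1/n}` over `θ ≥ 1`. -/
def IsZlim (b : ℕ) (P : Measure (ℕ → ℝ)) (z : ℝ) : Prop :=
  ∀ θ : ℝ, 1 ≤ θ →
    Tendsto (fun n : ℕ => Zfun b P n θ ^ (1 / (n : ℝ))) atTop (nhds z)

/-- `ψ θ = lim_n Z_n(θ) z^{-n}` for all `θ ≥ 0`. -/
def IsPsiFun (b : ℕ) (P : Measure (ℕ → ℝ)) (z : ℝ) (ψ : ℝ → ℝ) : Prop :=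
  ∀ θ : ℝ, 0 ≤ θ →
    Tendsto (fun n : ℕ => Zfun b P n θ / z ^ n) atTop (nhds (ψ θ))

/-- `Phat` is the limit of `P_n^{(θ)}` (tested on bounded measurable functions of
finitely many coordinates), independently of `θ ≥ 1`. -/
def IsLawQhat (b : ℕ) (P : Measure (ℕ → ℝ)) (Phat : Measure (ℕ → ℝ)) : Prop :=
  IsProbabilityMeasure Phat ∧
  ∀ θ : ℝ, 1 ≤ θ → ∀ k : ℕ, ∀ f : (ℕ → ℝ) → ℝ, Measurable f →
    (∃ M : ℝ, ∀ y, |f y| ≤ M) →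
    (∀ y y' : ℕ → ℝ, (∀ i, 1 ≤ i → i ≤ k → y i = y' i) → f y = f y') →
    Tendsto (fun n : ℕ => ∫ y, f y ∂(PnTheta b P n θ)) atTop (nhds (∫ y, f y ∂Phat))

/-- The class `M♭`: probability measures on `[0,1]`, absolutely continuous with a bounded
density w.r.t. Lebesgue measure, giving positive mass to `[1 - 1/b, 1]`. -/
def MFlat (b : ℕ) (ρ : Measure ℝ) : Prop :=
  IsProbabilityMeasure ρ ∧ ρ ((Set.Icc (0 : ℝ) 1)ᶜ) = 0 ∧
  (∃ C : NNReal, ∀ s : Set ℝ, ρ s ≤ C * volume s) ∧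
  0 < ρ (Set.Icc (1 - 1 / (b : ℝ)) 1)

/-- The defining property of `c_ρ`. -/
def IsCrho (b : ℕ) (ρ : Measure ℝ) (Phat : Measure (ℕ → ℝ)) (ψ : ℝ → ℝ) (c : ℝ) : Prop :=
  0 < c ∧
  1 / c ^ 2 = ((b : ℝ) - 1) / 2 *
    ∫ y, (∫ x, ψ (x + Qinf b y / (b : ℝ)) ∂ρ) ^ 2
      ∂(ProbabilityTheory.cond Phat {y | 1 ≤ Qinf b y})

/-- `Q_σ^{(θ)}` on the tree: `Q_∅ = θ`, `Q_σ = X_σ + Q_{m(σ)}/b`. -/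
noncomputable def treeQ (b : ℕ) (θ : ℝ) (x : V b → ℝ) : V b → ℝ
  | [] => θ
  | a :: l => x (a :: l) + treeQ b θ x l / (b : ℝ)

/-!
Put `θ⋆ = b / (b - 1)`, the fixed point of `θ ↦ 1 + θ / b`. As the `X_k` lie in `[0, 1]`, the
chain started at `θ⋆` never exceeds `θ⋆`, so restarting it at time `n` from `θ⋆` and using the
independence of past and future gives `Z_{n+m}(θ⋆) ≤ Z_n(θ⋆) Z_m(θ⋆)`; dually, a chain that
survives `n` steps is at level `≥ 1`, which gives `Z_n(1) Z_m(1) ≤ Z_{n+m}(1)`. Hence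
`Z_n(1)^{1/n} ≤ z ≤ Z_n(θ⋆)^{1/n}` for every `n ≥ 1`, and both bounds tend to `z`.

Each `Z_n(θ)` only involves `X_1, …, X_n`, so it is Lipschitz in the mixing parameter `α`. Thus
`z` is a pointwise limit of continuous functions from above and from below: it is upper and
lower semicontinuous, hence continuous.
-/

section Semicontinuity

variable {α γ ι : Type*} [TopologicalSpace α] [LinearOrder γ] [TopologicalSpace γ]
  [OrderTopology γ] {l : Filter ι} [l.NeBot] {u : ι → α → γ} {f : α → γ} {s : Set α}

theorem upperSemicontinuousOn_of_tendsto_of_le (hu : ∀ i, ContinuousOn (u i) s)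
    (hle : ∀ᶠ i in l, ∀ x ∈ s, f x ≤ u i x)
    (hlim : ∀ x ∈ s, Tendsto (fun i => u i x) l (nhds (f x))) :
    UpperSemicontinuousOn f s := by
  intro x hx y hy
  obtain ⟨i, hfu, hui⟩ := (hle.and ((hlim x hx).eventually (gt_mem_nhds hy))).exists
  filter_upwards [(hu i x hx).eventually (gt_mem_nhds hui), self_mem_nhdsWithin]
    with x' hx' hx's
  exact (hfu x' hx's).trans_lt hx'

theorem lowerSemicontinuousOn_of_tendsto_of_le (hu : ∀ i, ContinuousOn (u i) s)
    (hle : ∀ᶠ i in l, ∀ x ∈ s, u i x ≤ f x)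
    (hlim : ∀ x ∈ s, Tendsto (fun i => u i x) l (nhds (f x))) :
    LowerSemicontinuousOn f s :=
  upperSemicontinuousOn_of_tendsto_of_le (γ := γᵒᵈ) hu hle hlim

end Semicontinuity

theorem rpow_one_div_mul_self {A : ℝ} (hA : 0 ≤ A) {k n : ℕ} (hk : k ≠ 0) :
    (A ^ k) ^ (1 / ((k * n : ℕ) : ℝ)) = A ^ (1 / (n : ℝ)) := by
  rw [← Real.rpow_natCast A k, ← Real.rpow_mul hA]
  congr 1
  push_cast
  field_simp

section Multiplicative

variable {a : ℕ → ℝ} {z : ℝ} {n : ℕ}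

theorem le_rpow_one_div_of_submultiplicative (ha : ∀ n, 0 ≤ a n)
    (hmul : ∀ m n, a (m + n) ≤ a m * a n)
    (hlim : Tendsto (fun n => a n ^ (1 / (n : ℝ))) atTop (nhds z)) (hn : n ≠ 0) :
    z ≤ a n ^ (1 / (n : ℝ)) := by
  have hpow : ∀ k, a ((k + 1) * n) ≤ a n ^ (k + 1) := by
    intro k
    induction k with
    | zero => simp
    | succ k ih =>
      calc a ((k + 1 + 1) * n) = a ((k + 1) * n + n) := by ring_nf
        _ ≤ a ((k + 1) * n) * a n := hmul _ _
        _ ≤ a n ^ (k + 1) * a n := mul_le_mul_of_nonneg_right ih (ha n)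
        _ = a n ^ (k + 1 + 1) := (pow_succ _ _).symm
  have hsub : Tendsto (fun k : ℕ => (k + 1) * n) atTop atTop :=
    (tendsto_add_atTop_nat 1).atTop_mul_const' (Nat.pos_of_ne_zero hn)
  refine le_of_tendsto (hlim.comp hsub) (Eventually.of_forall fun k => ?_)
  calc a ((k + 1) * n) ^ (1 / (((k + 1) * n : ℕ) : ℝ))
      ≤ (a n ^ (k + 1)) ^ (1 / (((k + 1) * n : ℕ) : ℝ)) :=
        Real.rpow_le_rpow (ha _) (hpow k) (by positivity)
    _ = a n ^ (1 / (n : ℝ)) := rpow_one_div_mul_self (ha n) k.succ_ne_zero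

theorem rpow_one_div_le_of_supermultiplicative (ha : ∀ n, 0 ≤ a n)
    (hmul : ∀ m n, a m * a n ≤ a (m + n))
    (hlim : Tendsto (fun n => a n ^ (1 / (n : ℝ))) atTop (nhds z)) (hn : n ≠ 0) :
    a n ^ (1 / (n : ℝ)) ≤ z := by
  have hpow : ∀ k, a n ^ (k + 1) ≤ a ((k + 1) * n) := by
    intro k
    induction k with
    | zero => simp
    | succ k ih =>
      calc a n ^ (k + 1 + 1) = a n ^ (k + 1) * a n := pow_succ _ _
        _ ≤ a ((k + 1) * n) * a n := mul_le_mul_of_nonneg_right ih (ha n)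
        _ ≤ a ((k + 1) * n + n) := hmul _ _
        _ = a ((k + 1 + 1) * n) := by ring_nf
  have hsub : Tendsto (fun k : ℕ => (k + 1) * n) atTop atTop :=
    (tendsto_add_atTop_nat 1).atTop_mul_const' (Nat.pos_of_ne_zero hn)
  refine ge_of_tendsto (hlim.comp hsub) (Eventually.of_forall fun k => ?_)
  calc a n ^ (1 / (n : ℝ)) = (a n ^ (k + 1)) ^ (1 / (((k + 1) * n : ℕ) : ℝ)) :=
        (rpow_one_div_mul_self (ha n) k.succ_ne_zero).symm
    _ ≤ a ((k + 1) * n) ^ (1 / (((k + 1) * n : ℕ) : ℝ)) :=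
        Real.rpow_le_rpow (pow_nonneg (ha n) _) (hpow k) (by positivity)

end Multiplicative

theorem pi_le_pi_add_of_le_add {X : Type*} [MeasurableSpace X] {μ ν κ : Measure X}
    [IsProbabilityMeasure μ] [IsProbabilityMeasure ν] (h : μ ≤ ν + κ) :
    ∀ (n : ℕ) {S : Set (Fin n → X)}, MeasurableSet S →
      Measure.pi (fun _ => μ) S ≤ Measure.pi (fun _ => ν) S + n * κ univ
  | 0, S, _ => by rw [Measure.pi_of_empty, Measure.pi_of_empty]; exact le_self_add
  | n + 1, S, hS => by
    let e := MeasurableEquiv.piFinSuccAbove (fun _ : Fin (n + 1) => X) 0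
    let T := e.symm ⁻¹' S
    have hT : MeasurableSet T := e.symm.measurable hS
    have hslice : ∀ x, MeasurableSet (Prod.mk x ⁻¹' T) := fun x => measurable_prodMk_left hT
    have hpi : ∀ η : Measure X, [IsProbabilityMeasure η] →
        Measure.pi (fun _ => η) S = (η.prod (Measure.pi fun _ : Fin n => η)) T :=
      fun η _ =>
        (((measurePreserving_piFinSuccAbove (fun _ => η) 0).symm e).measure_preimage_equiv S).symm
    set f := fun x => Measure.pi (fun _ : Fin n => ν) (Prod.mk x ⁻¹' T)
    rw [hpi μ, hpi ν, Measure.prod_apply hT, Measure.prod_apply hT]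
    calc ∫⁻ x, Measure.pi (fun _ : Fin n => μ) (Prod.mk x ⁻¹' T) ∂μ
        ≤ ∫⁻ x, (f x + n * κ univ) ∂μ :=
          lintegral_mono fun x => pi_le_pi_add_of_le_add h n (hslice x)
      _ = ∫⁻ x, f x ∂μ + n * κ univ := by
        rw [lintegral_add_right _ measurable_const, lintegral_const, measure_univ (μ := μ), mul_one]
      _ ≤ ∫⁻ x, f x ∂ν + ∫⁻ x, f x ∂κ + n * κ univ := by
        gcongr
        rw [← lintegral_add_measure]
        exact lintegral_mono' h le_rfl
      _ ≤ ∫⁻ x, f x ∂ν + κ univ + n * κ univ := by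
        gcongr
        exact (lintegral_mono fun _ => prob_le_one).trans_eq lintegral_one
      _ = ∫⁻ x, f x ∂ν + (n + 1 : ℕ) * κ univ := by push_cast; ring

def shiftSeq (n : ℕ) (x : ℕ → ℝ) : ℕ → ℝ := fun i => x (n + i)

def survivalSet (b n : ℕ) (θ : ℝ) : Set (ℕ → ℝ) := {x | ∀ k ≤ n, 1 ≤ Qseq b θ x k}

theorem Zfun_eq_measure_survivalSet (b : ℕ) (P : Measure (ℕ → ℝ)) (n : ℕ) (θ : ℝ) :
    Zfun b P n θ = (P (survivalSet b n θ)).toReal := rfl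

section Qseq

variable {b : ℕ} {θ θ' : ℝ} {x y : ℕ → ℝ}

theorem Qseq_congr : ∀ {k : ℕ}, (∀ i, 1 ≤ i → i ≤ k → x i = y i) →
    Qseq b θ x k = Qseq b θ y k
  | 0, _ => rfl
  | k + 1, h => by
    rw [Qseq, Qseq, h (k + 1) k.succ_pos le_rfl, Qseq_congr fun i h1 h2 => h i h1 (by omega)]

theorem Qseq_add (n : ℕ) : ∀ k, Qseq b θ x (n + k) = Qseq b (Qseq b θ x n) (shiftSeq n x) k
  | 0 => rfl
  | k + 1 => by rw [← add_assoc, Qseq, Qseq, Qseq_add n k]; rfl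

theorem Qseq_mono (h : θ ≤ θ') : ∀ k, Qseq b θ x k ≤ Qseq b θ' x k
  | 0 => h
  | k + 1 => by
    rw [Qseq, Qseq]
    gcongr
    exact Qseq_mono h k

theorem one_le_div_sub_one (hb : 1 < b) : 1 ≤ (b : ℝ) / (b - 1) := by
  have : (1 : ℝ) < b := by exact_mod_cast hb
  rw [one_le_div (by linarith)]
  linarith

theorem Qseq_le_div_sub_one (hb : 1 < b) (hx : ∀ i, x i ≤ 1) :
    ∀ k, Qseq b ((b : ℝ) / (b - 1)) x k ≤ b / (b - 1)
  | 0 => le_rfl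
  | k + 1 => by
    have hb' : (1 : ℝ) < b := by exact_mod_cast hb
    have hfix : 1 + (b : ℝ) / (b - 1) / b = b / (b - 1) := by
      field_simp [show (b : ℝ) - 1 ≠ 0 by linarith]
      ring
    calc x (k + 1) + Qseq b ((b : ℝ) / (b - 1)) x k / b ≤ 1 + (b : ℝ) / (b - 1) / b := by
          gcongr
          · exact hx _
          · exact Qseq_le_div_sub_one hb hx k
      _ = b / (b - 1) := hfix

theorem measurable_Qseq {Ω : Type*} {mΩ : MeasurableSpace Ω} {Y : ℕ → Ω → ℝ} :
    ∀ {k : ℕ}, (∀ i, 1 ≤ i → i ≤ k → Measurable (Y i)) →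
      Measurable fun ω => Qseq b θ (fun i => Y i ω) k
  | 0, _ => measurable_const
  | k + 1, hY => (hY (k + 1) k.succ_pos le_rfl).add
      ((measurable_Qseq fun i h1 h2 => hY i h1 (by omega)).div_const _)

end Qseq

section survivalSet

variable {b n m : ℕ} {θ : ℝ}

theorem measurableSet_preimage_survivalSet {Ω : Type*} {mΩ : MeasurableSpace Ω}
    {Y : ℕ → Ω → ℝ} (hY : ∀ i, 1 ≤ i → i ≤ n → Measurable (Y i)) :
    MeasurableSet ((fun ω i => Y i ω) ⁻¹' survivalSet b n θ) := by
  show MeasurableSet {ω | ∀ k ≤ n, 1 ≤ Qseq b θ (fun i => Y i ω) k}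
  simp only [ofPred_forall]
  exact .iInter fun k => .iInter fun hk =>
    measurableSet_le measurable_const (measurable_Qseq fun i h1 h2 => hY i h1 (h2.trans hk))

theorem measurableSet_survivalSet : MeasurableSet (survivalSet b n θ) :=
  measurableSet_preimage_survivalSet (Y := fun i (x : ℕ → ℝ) => x i) fun i _ _ =>
    measurable_pi_apply i

theorem mem_survivalSet_congr {x y : ℕ → ℝ} (h : ∀ i, 1 ≤ i → i ≤ n → x i = y i) :
    x ∈ survivalSet b n θ ↔ y ∈ survivalSet b n θ :=
  forall₂_congr fun _ hk => by rw [Qseq_congr fun i h1 h2 => h i h1 (h2.trans hk)]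

theorem survivalSet_inter_shiftSeq_subset :
    survivalSet b n θ ∩ shiftSeq n ⁻¹' survivalSet b m 1 ⊆ survivalSet b (n + m) θ := by
  rintro x ⟨hx, hshift⟩ k hk
  obtain hkn | hnk := le_or_gt k n
  · exact hx k hkn
  · obtain ⟨j, rfl⟩ := Nat.exists_eq_add_of_le hnk.le
    rw [Qseq_add]
    exact (hshift j (by omega)).trans (Qseq_mono (hx n le_rfl) j)

theorem survivalSet_subset_inter_shiftSeq (hb : 1 < b) {x : ℕ → ℝ} (hx : ∀ i, x i ≤ 1)
    (hmem : x ∈ survivalSet b (n + m) ((b : ℝ) / (b - 1))) :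
    x ∈ survivalSet b n ((b : ℝ) / (b - 1)) ∩
      shiftSeq n ⁻¹' survivalSet b m ((b : ℝ) / (b - 1)) := by
  refine ⟨fun k hk => hmem k (by omega), fun k hk => ?_⟩
  calc (1 : ℝ) ≤ Qseq b ((b : ℝ) / (b - 1)) x (n + k) := hmem (n + k) (by omega)
    _ = Qseq b (Qseq b ((b : ℝ) / (b - 1)) x n) (shiftSeq n x) k := Qseq_add n k
    _ ≤ Qseq b ((b : ℝ) / (b - 1)) (shiftSeq n x) k :=
      Qseq_mono (Qseq_le_div_sub_one hb hx n) k

end survivalSet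

theorem measurable_shiftSeq (n : ℕ) : Measurable (shiftSeq n) :=
  measurable_pi_lambda _ fun _ => measurable_pi_apply _

def initSeg (n : ℕ) (x : ℕ → ℝ) : Fin (n + 1) → ℝ := fun i => x i

theorem measurable_initSeg (n : ℕ) : Measurable (initSeg n) :=
  measurable_pi_lambda _ fun _ => measurable_pi_apply _

def padSeq (n : ℕ) (v : Fin (n + 1) → ℝ) : ℕ → ℝ := fun j => if h : j < n + 1 then v ⟨j, h⟩ else 0

theorem measurableSet_padSeq_preimage_survivalSet {b n : ℕ} {θ : ℝ} :
    MeasurableSet (padSeq n ⁻¹' survivalSet b n θ) :=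
  measurableSet_preimage_survivalSet (Y := fun j v => padSeq n v j) fun j _ _ => by
    unfold padSeq
    split
    · exact measurable_pi_apply _
    · exact measurable_const

theorem survivalSet_eq_preimage_initSeg {b n : ℕ} {θ : ℝ} :
    survivalSet b n θ = initSeg n ⁻¹' (padSeq n ⁻¹' survivalSet b n θ) := by
  ext x
  refine (mem_survivalSet_congr fun i _ hi => ?_).symm
  simp [padSeq, initSeg, Nat.lt_succ_of_le hi]

namespace IsProjIID

variable {μ : Measure ℝ} {P : Measure (ℕ → ℝ)} {b : ℕ}

theorem eq_infinitePi [IsProbabilityMeasure μ] (hP : IsProjIID μ P) :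
    P = Measure.infinitePi fun _ => μ := by
  obtain ⟨_, hindep, hlaw⟩ := hP
  simpa [hlaw] using
    (iIndepFun_iff_map_fun_eq_infinitePi_map fun i => measurable_pi_apply i).1 hindep

theorem map_shiftSeq [IsProbabilityMeasure μ] (hP : IsProjIID μ P) (n : ℕ) :
    P.map (shiftSeq n) = P := by
  rw [hP.eq_infinitePi]
  exact Measure.map_infinitePi_infinitePi_of_inj (add_right_injective n)

theorem map_initSeg [IsProbabilityMeasure μ] (hP : IsProjIID μ P) (n : ℕ) :
    P.map (initSeg n) = Measure.pi fun _ => μ := by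
  rw [hP.eq_infinitePi, show initSeg n = fun x i => x i from rfl,
    Measure.map_infinitePi_infinitePi_of_inj (Fin.val_injective (n := n + 1)),
    Measure.infinitePi_eq_pi]

theorem measure_survivalSet [IsProbabilityMeasure μ] (hP : IsProjIID μ P) (n : ℕ) (θ : ℝ) :
    P (survivalSet b n θ) = Measure.pi (fun _ => μ) (padSeq n ⁻¹' survivalSet b n θ) := by
  rw [← hP.map_initSeg, Measure.map_apply (measurable_initSeg n)
    measurableSet_padSeq_preimage_survivalSet, ← survivalSet_eq_preimage_initSeg]

theorem measure_survivalSet_inter_shiftSeq [IsProbabilityMeasure μ] (hP : IsProjIID μ P)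
    (n m : ℕ) (θ θ' : ℝ) :
    P (survivalSet b n θ ∩ shiftSeq n ⁻¹' survivalSet b m θ') =
      P (survivalSet b n θ) * P (survivalSet b m θ') := by
  have hcoord : ∀ (S : Set ℕ), ∀ i ∈ S,
      Measurable[⨆ j ∈ S, MeasurableSpace.comap (fun x : ℕ → ℝ => x j) inferInstance]
        fun x => x i :=
    fun S i hi => Measurable.of_comap_le <|
      le_iSup₂ (f := fun j (_ : j ∈ S) => MeasurableSpace.comap (fun x : ℕ → ℝ => x j) _) i hi
  have hindep := indep_iSup_of_disjoint (fun i => (measurable_pi_apply i).comap_le)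
    ((iIndepFun_iff_iIndep _ _ _).1 hP.2.1) (Set.Iic_disjoint_Ioi (le_refl n))
  have hpast : MeasurableSet[⨆ i ∈ Iic n, _] (survivalSet b n θ) :=
    measurableSet_preimage_survivalSet (Y := fun i (x : ℕ → ℝ) => x i)
      fun i _ hi => hcoord _ i hi
  have hfuture : MeasurableSet[⨆ i ∈ Ioi n, _] (shiftSeq n ⁻¹' survivalSet b m θ') :=
    measurableSet_preimage_survivalSet (Y := fun i (x : ℕ → ℝ) => x (n + i))
      fun i hi _ => hcoord _ _ (by simp only [mem_Ioi]; omega)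
  rw [(Indep_iff _ _ _).1 hindep _ _ hpast hfuture,
    ← Measure.map_apply (measurable_shiftSeq n) measurableSet_survivalSet, hP.map_shiftSeq]

theorem ae_forall {p : ℝ → Prop} (hP : IsProjIID μ P) (h : ∀ᵐ x ∂μ, p x) :
    ∀ᵐ x ∂P, ∀ i, p (x i) :=
  ae_all_iff.2 fun i => ae_of_ae_map (measurable_pi_apply i).aemeasurable (by rwa [hP.2.2 i])

theorem Zfun_add_le_mul [IsProbabilityMeasure μ] (hP : IsProjIID μ P) (hμ : ∀ᵐ x ∂μ, x ≤ 1)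
    (hb : 1 < b) (n m : ℕ) :
    Zfun b P (n + m) ((b : ℝ) / (b - 1)) ≤
      Zfun b P n ((b : ℝ) / (b - 1)) * Zfun b P m ((b : ℝ) / (b - 1)) := by
  have := hP.1
  simp only [Zfun_eq_measure_survivalSet]
  rw [← ENNReal.toReal_mul, ← hP.measure_survivalSet_inter_shiftSeq]
  exact ENNReal.toReal_mono (measure_ne_top _ _) <| measure_mono_ae <|
    (hP.ae_forall hμ).mono fun x hx hmem => survivalSet_subset_inter_shiftSeq hb hx hmem

theorem mul_le_Zfun_add [IsProbabilityMeasure μ] (hP : IsProjIID μ P) (n m : ℕ) :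
    Zfun b P n 1 * Zfun b P m 1 ≤ Zfun b P (n + m) 1 := by
  have := hP.1
  simp only [Zfun_eq_measure_survivalSet]
  rw [← ENNReal.toReal_mul, ← hP.measure_survivalSet_inter_shiftSeq]
  exact ENNReal.toReal_mono (measure_ne_top _ _) (measure_mono survivalSet_inter_shiftSeq_subset)

theorem Zfun_le_add_of_le_add {ν κ : Measure ℝ} {Q : Measure (ℕ → ℝ)} [IsProbabilityMeasure μ]
    [IsProbabilityMeasure ν] [IsFiniteMeasure κ] (hP : IsProjIID μ P) (hQ : IsProjIID ν Q)
    (h : μ ≤ ν + κ) (n : ℕ) (θ : ℝ) :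
    Zfun b P n θ ≤ Zfun b Q n θ + (n + 1) * (κ univ).toReal := by
  have := hQ.1
  have hpi := pi_le_pi_add_of_le_add h (n + 1)
    (measurableSet_padSeq_preimage_survivalSet (b := b) (θ := θ))
  rw [← hP.measure_survivalSet, ← hQ.measure_survivalSet] at hpi
  simp only [Zfun_eq_measure_survivalSet]
  calc (P (survivalSet b n θ)).toReal
      ≤ (Q (survivalSet b n θ) + (n + 1 : ℕ) * κ univ).toReal :=
        ENNReal.toReal_mono (by finiteness) hpi
    _ = (Q (survivalSet b n θ)).toReal + (n + 1) * (κ univ).toReal := by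
        rw [ENNReal.toReal_add (by finiteness) (by finiteness), ENNReal.toReal_mul]
        push_cast
        rfl

end IsProjIID

namespace IsZlim

variable {μ : Measure ℝ} {P : Measure (ℕ → ℝ)} {b n : ℕ} {z : ℝ}

theorem le_Zfun_rpow [IsProbabilityMeasure μ] (hz : IsZlim b P z) (hP : IsProjIID μ P)
    (hμ : ∀ᵐ x ∂μ, x ≤ 1) (hb : 1 < b) (hn : n ≠ 0) :
    z ≤ Zfun b P n ((b : ℝ) / (b - 1)) ^ (1 / (n : ℝ)) :=
  le_rpow_one_div_of_submultiplicative (a := fun n => Zfun b P n _) (fun _ => ENNReal.toReal_nonneg)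
    (hP.Zfun_add_le_mul hμ hb) (hz _ (one_le_div_sub_one hb)) hn

theorem Zfun_rpow_le [IsProbabilityMeasure μ] (hz : IsZlim b P z) (hP : IsProjIID μ P)
    (hn : n ≠ 0) : Zfun b P n 1 ^ (1 / (n : ℝ)) ≤ z :=
  rpow_one_div_le_of_supermultiplicative (a := fun n => Zfun b P n 1)
    (fun _ => ENNReal.toReal_nonneg) hP.mul_le_Zfun_add (hz 1 le_rfl) hn

end IsZlim

section Mixture

variable {X : Type*} [MeasurableSpace X] (ρ ρ' : Measure X) {α β : ℝ}

noncomputable def mixture (α : ℝ) : Measure X :=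
  ENNReal.ofReal α • ρ + ENNReal.ofReal (1 - α) • ρ'

theorem isProbabilityMeasure_mixture [IsProbabilityMeasure ρ] [IsProbabilityMeasure ρ']
    (hα : α ∈ Icc 0 1) : IsProbabilityMeasure (mixture ρ ρ' α) := by
  constructor
  rw [mixture, Measure.add_apply, Measure.smul_apply, Measure.smul_apply, measure_univ,
    measure_univ, smul_eq_mul, smul_eq_mul, mul_one, mul_one,
    ← ENNReal.ofReal_add hα.1 (by linarith [hα.2])]
  norm_num

theorem mixture_le_add (hβ : β ∈ Icc 0 1) :
    mixture ρ ρ' α ≤ mixture ρ ρ' β + ENNReal.ofReal |α - β| • (ρ + ρ') := by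
  have hcoef : ∀ {a c : ℝ}, 0 ≤ c → a ≤ c + |α - β| →
      ENNReal.ofReal a ≤ ENNReal.ofReal c + ENNReal.ofReal |α - β| := fun hc h => by
    rw [← ENNReal.ofReal_add hc (abs_nonneg _)]
    exact ENNReal.ofReal_le_ofReal h
  refine Measure.le_intro fun s _ _ => ?_
  simp only [mixture, Measure.add_apply, Measure.smul_apply, smul_eq_mul]
  calc ENNReal.ofReal α * ρ s + ENNReal.ofReal (1 - α) * ρ' s
      ≤ (ENNReal.ofReal β + ENNReal.ofReal |α - β|) * ρ s
        + (ENNReal.ofReal (1 - β) + ENNReal.ofReal |α - β|) * ρ' s := by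
        gcongr
        · exact hcoef hβ.1 (by linarith [le_abs_self (α - β)])
        · exact hcoef (by linarith [hβ.2]) (by linarith [neg_abs_le (α - β)])
    _ = ENNReal.ofReal β * ρ s + ENNReal.ofReal (1 - β) * ρ' s
        + ENNReal.ofReal |α - β| * (ρ s + ρ' s) := by ring

theorem ae_mixture {p : X → Prop} (hρ : ∀ᵐ x ∂ρ, p x) (hρ' : ∀ᵐ x ∂ρ', p x) :
    ∀ᵐ x ∂mixture ρ ρ' α, p x :=
  ae_add_measure_iff.2 ⟨Measure.ae_smul_measure hρ _, Measure.ae_smul_measure hρ' _⟩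

end Mixture

theorem continuousOn_Zfun_mixture {ρ ρ' : Measure ℝ} [IsProbabilityMeasure ρ]
    [IsProbabilityMeasure ρ'] {P : ℝ → Measure (ℕ → ℝ)}
    (hP : ∀ α ∈ Icc (0 : ℝ) 1, IsProjIID (mixture ρ ρ' α) (P α)) (b n : ℕ) (θ : ℝ) :
    ContinuousOn (fun α => Zfun b (P α) n θ) (Icc 0 1) := by
  refine (LipschitzOnWith.of_le_add_mul' (2 * (n + 1)) fun α hα β hβ => ?_).continuousOn
  have := isProbabilityMeasure_mixture ρ ρ' hα
  have := isProbabilityMeasure_mixture ρ ρ' hβ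
  have : IsFiniteMeasure (ENNReal.ofReal |α - β| • (ρ + ρ')) := ⟨by simp⟩
  refine ((hP α hα).Zfun_le_add_of_le_add (hP β hβ) (mixture_le_add ρ ρ' hβ) n θ).trans_eq ?_
  rw [Measure.smul_apply, Measure.add_apply, measure_univ, measure_univ, smul_eq_mul,
    ENNReal.toReal_mul, ENNReal.toReal_ofReal (abs_nonneg _), Real.dist_eq]
  norm_num
  ring

/-- `α ↦ z(αρ + (1-α)ρ')` is continuous on `[0,1]`. -/
theorem z_continuous_in_mixture
    (b : ℕ) (hb : 2 ≤ b) (ρ ρ' : Measure ℝ)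
    (hρ : IsProbabilityMeasure ρ) (hρ' : IsProbabilityMeasure ρ')
    (hs : ρ ((Set.Icc (0 : ℝ) 1)ᶜ) = 0) (hs' : ρ' ((Set.Icc (0 : ℝ) 1)ᶜ) = 0)
    (P : ℝ → Measure (ℕ → ℝ))
    (hP : ∀ α ∈ Set.Icc (0 : ℝ) 1,
      IsProjIID (ENNReal.ofReal α • ρ + ENNReal.ofReal (1 - α) • ρ') (P α))
    (z : ℝ → ℝ) (hz : ∀ α ∈ Set.Icc (0 : ℝ) 1, IsZlim b (P α) (z α)) :
    ContinuousOn z (Set.Icc 0 1) := by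
  change ∀ α ∈ Icc (0 : ℝ) 1, IsProjIID (mixture ρ ρ' α) (P α) at hP
  have hprob := fun α (hα : α ∈ Icc (0 : ℝ) 1) => isProbabilityMeasure_mixture ρ ρ' hα
  have hle_one : ∀ α, ∀ᵐ x ∂mixture ρ ρ' α, x ≤ 1 := fun α =>
    ae_mixture ρ ρ' (ae_iff.2 (measure_mono_null (fun x hx => hx ∘ And.right) hs))
      (ae_iff.2 (measure_mono_null (fun x hx => hx ∘ And.right) hs'))
  have hroot : ∀ (n : ℕ) (θ : ℝ),
      ContinuousOn (fun α => Zfun b (P α) n θ ^ (1 / (n : ℝ))) (Icc 0 1) := fun n θ =>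
    (continuousOn_Zfun_mixture hP b n θ).rpow_const fun _ _ => Or.inr (by positivity)
  rw [continuousOn_iff_lower_upperSemicontinuousOn]
  constructor
  · refine lowerSemicontinuousOn_of_tendsto_of_le (hroot · 1) ?_ fun α hα => hz α hα 1 le_rfl
    filter_upwards [eventually_ne_atTop 0] with n hn α hα
    have := hprob α hα
    exact (hz α hα).Zfun_rpow_le (hP α hα) hn
  · refine upperSemicontinuousOn_of_tendsto_of_le (hroot · ((b : ℝ) / (b - 1))) ?_
      fun α hα => hz α hα _ (one_le_div_sub_one hb)
    filter_upwards [eventually_ne_atTop 0] with n hn α hα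
    have := hprob α hα
    exact (hz α hα).le_Zfun_rpow (hP α hα) (hle_one α) hb hn

end OrgCrit
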